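/- arXiv:1904.07587 — 3 statements merged into one kernel-verified Lean document; each statement's English description precedes it below -/
import Mathlib

section
/- Let $A$, $B$ be polynomial rings over a field $k$ in disjoint variables, $R = A \otimes_k B$, $I \subseteq A$ a nonzero proper homogeneous ideal, $x \in A$ a variable and $y \in B$ a variable, and $J \subseteq B$ a nonzero proper homogeneous ideal. Then every associated prime of $(I, x-y)$ in $R$ is an associated prime of $(IJ, x-y)$; that is, $\{(\mathfrak{p}, x-y) : \mathfrak{p} \in \operatorname{Ass}(I)\} \subseteq \operatorname{Ass}(IJ, x-y)$. -/
open MvPolynomial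

/-- An ideal of a polynomial ring is homogeneous if it contains all homogeneous
components of each of its elements. -/
def IsHomogIdeal {k : Type*} [Field k] {σ : Type*} (I : Ideal (MvPolynomial σ k)) : Prop :=
  ∀ p ∈ I, ∀ i : ℕ, MvPolynomial.homogeneousComponent i p ∈ I

/-- The depth of a module `M` with respect to an ideal `𝔪`: the supremum of the lengths of
`M`-regular sequences consisting of elements of `𝔪`. -/
noncomputable def idealDepth {R : Type*} [CommRing R] (𝔪 : Ideal R)
    (M : Type*) [AddCommGroup M] [Module R M] : ℕ :=
  sSup {n : ℕ | ∃ rs : List R, rs.length = n ∧ (∀ r ∈ rs, r ∈ 𝔪) ∧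
    RingTheory.Sequence.IsRegular M rs}

/-- The depth of `S/Q` for an ideal `Q` of a polynomial ring `S`, with respect to the
maximal homogeneous ideal of `S`. -/
noncomputable def polyDepth {k : Type*} [Field k] {σ : Type*}
    (Q : Ideal (MvPolynomial σ k)) : ℕ :=
  idealDepth (Ideal.span (Set.range (MvPolynomial.X : σ → MvPolynomial σ k)))
    (MvPolynomial σ k ⧸ Q)

/-- Extension of an ideal of `k[x_1,...,x_r]` to `k[x_1,...,x_r,y_1,...,y_s]`. -/
noncomputable def extA {k : Type*} [Field k] {r s : ℕ}
    (I : Ideal (MvPolynomial (Fin r) k)) : Ideal (MvPolynomial (Fin r ⊕ Fin s) k) :=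
  I.map (rename (Sum.inl (β := Fin s)) : MvPolynomial (Fin r) k →ₐ[k] MvPolynomial (Fin r ⊕ Fin s) k)

/-- Extension of an ideal of `k[y_1,...,y_s]` to `k[x_1,...,x_r,y_1,...,y_s]`. -/
noncomputable def extB {k : Type*} [Field k] {r s : ℕ}
    (J : Ideal (MvPolynomial (Fin s) k)) : Ideal (MvPolynomial (Fin r ⊕ Fin s) k) :=
  J.map (rename (Sum.inr (α := Fin r)) : MvPolynomial (Fin s) k →ₐ[k] MvPolynomial (Fin r ⊕ Fin s) k)

/-! Write `ξ = x_i - y_j` and let `identify i j` substitute `x_i` for `y_j`. Every polynomial is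
congruent to its image modulo `ξ`, so `h ∈ L + (ξ)` exactly when `identify h` lies in the image
of `L`. Let `𝔭 = (I : a)`, and let `c` be the `y_j`-adic order of `J`, attained at `y_j^c b ∈ J`
with `y_j ∤ b`; put `b' = identify b`. For `g = a · x_i^c · b'` one gets
`(IJ + (ξ) : g) = 𝔭R + (ξ)`: after the substitution `IJ` lands in `x_i^c · IR`, and `b' ∉ 𝔭R`
because sending every `x` to `0` kills `𝔭R` but sends `b'` to `b(y_j = 0) ≠ 0`. That `𝔭` has no
element with nonzero constant term is where the homogeneity of `I` enters: such an element is a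
nonzerodivisor modulo `I`. -/

open Finset

namespace MvPolynomial

attribute [local instance] MvPolynomial.gradedAlgebra in
theorem homogeneousComponent_mul {σ R : Type*} [CommSemiring R] (p q : MvPolynomial σ R)
    (n : ℕ) : homogeneousComponent n (p * q) =
      ∑ x ∈ antidiagonal n, homogeneousComponent x.1 p * homogeneousComponent x.2 q := by
  simp only [← decomposition.decompose'_apply]
  change (DirectSum.decompose (homogeneousSubmodule σ R) (p * q) n : MvPolynomial σ R) = _
  rw [DirectSum.decompose_mul, DirectSum.coe_mul_apply_eq_sum_antidiagonal]
  rfl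

theorem sub_mem_of_forall_X_sub_mem {σ R : Type*} [CommRing R] {L : Ideal (MvPolynomial σ R)}
    (φ : MvPolynomial σ R →ₐ[R] MvPolynomial σ R) (hφ : ∀ n, X n - φ (X n) ∈ L)
    (p : MvPolynomial σ R) : p - φ p ∈ L := by
  have h : Ideal.Quotient.mkₐ R L = (Ideal.Quotient.mkₐ R L).comp φ :=
    algHom_ext fun n => by simpa [Ideal.Quotient.eq] using hφ n
  exact Ideal.Quotient.eq.1 (congr($h p))

end MvPolynomial

theorem IsHomogIdeal.mem_of_mul_mem {k σ : Type*} [Field k] {I : Ideal (MvPolynomial σ k)}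
    (hI : IsHomogIdeal I) {u a : MvPolynomial σ k} (hu : constantCoeff u ≠ 0) (h : u * a ∈ I) :
    a ∈ I := by
  classical
  by_contra ha
  have hex : ∃ e, homogeneousComponent e a ∉ I := by
    by_contra! hall
    exact ha (sum_homogeneousComponent a ▸ I.sum_mem fun e _ => hall e)
  set e := Nat.find hex
  have hrest : ∑ x ∈ (antidiagonal e).erase (0, e),
      homogeneousComponent x.1 u * homogeneousComponent x.2 a ∈ I := by
    refine I.sum_mem fun x hx => I.mul_mem_left _ (not_not.1 (Nat.find_min hex ?_))
    obtain ⟨hne, hx⟩ := mem_erase.1 hx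
    rw [HasAntidiagonal.mem_antidiagonal] at hx
    by_contra! hle
    exact hne (Prod.ext (by show x.1 = 0; omega) (by show x.2 = e; omega))
  have hlead : C (constantCoeff u) * homogeneousComponent e a ∈ I := by
    have hsum := hI _ h e
    rw [homogeneousComponent_mul, ← add_sum_erase _ _ (HasAntidiagonal.mem_antidiagonal.2
      (zero_add e) : ((0, e) : ℕ × ℕ) ∈ antidiagonal e), homogeneousComponent_zero] at hsum
    simpa [constantCoeff_eq] using I.sub_mem hsum hrest
  exact Nat.find_spec hex ((Ideal.unit_mul_mem_iff_mem I (hu.isUnit.map C)).1 hlead)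

theorem IsHomogIdeal.le_ker_constantCoeff {k σ : Type*} [Field k]
    {I 𝔭 : Ideal (MvPolynomial σ k)} (hI : IsHomogIdeal I) (h𝔭 : 𝔭 ≠ ⊤)
    {a : MvPolynomial σ k} (hcolon : ∀ f, f ∈ 𝔭 ↔ f * a ∈ I) :
    𝔭 ≤ RingHom.ker (constantCoeff : MvPolynomial σ k →+* k) := by
  intro f hf
  by_contra hc
  have ha : a ∈ I := hI.mem_of_mul_mem hc ((hcolon f).1 hf)
  exact h𝔭 ((Ideal.eq_top_iff_one _).2 ((hcolon 1).2 (by rwa [one_mul])))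

theorem mem_associatedPrimes_quotient_iff {R : Type*} [CommRing R] [IsNoetherianRing R]
    {I 𝔭 : Ideal R} :
    𝔭 ∈ associatedPrimes R (R ⧸ I) ↔ 𝔭.IsPrime ∧ ∃ a : R, ∀ f, f ∈ 𝔭 ↔ f * a ∈ I := by
  rw [associatedPrimes, Set.mem_ofPred_eq, isAssociatedPrime_iff,
    Ideal.Quotient.mk_surjective.exists]
  refine and_congr_right fun _ => exists_congr fun a => ?_
  rw [SetLike.ext_iff]
  refine forall_congr' fun f => iff_congr Iff.rfl ?_
  rw [Submodule.mem_colon_singleton, Submodule.mem_bot, Algebra.smul_def,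
    Ideal.Quotient.algebraMap_eq, ← map_mul, Ideal.Quotient.eq_zero_iff_mem]

theorem Ideal.exists_le_span_pow_not_le {R : Type*} [CommRing R] [IsNoetherianRing R]
    [IsDomain R] {x : R} (hx : ¬IsUnit x) {J : Ideal R} (hJ : J ≠ ⊥) :
    ∃ c, J ≤ span {x ^ c} ∧ ¬J ≤ span {x ^ (c + 1)} := by
  classical
  have hex : ∃ n, ¬J ≤ span {x ^ n} := by
    by_contra! h
    refine hJ (eq_bot_iff.2 ?_)
    rw [← iInf_pow_eq_bot_of_isDomain (span {x}) (by rwa [Ne, span_singleton_eq_top])]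
    exact le_iInf fun n => (span_singleton_pow x n).symm ▸ h n
  obtain ⟨c, hc⟩ := Nat.exists_eq_add_one_of_ne_zero (n := Nat.find hex) fun h0 =>
    Nat.find_spec hex (by simp [h0])
  exact ⟨c, not_not.1 (Nat.find_min hex (by omega)), hc ▸ Nat.find_spec hex⟩

theorem Ideal.exists_pow_mul_mem_of_ne_bot {R : Type*} [CommRing R] [IsNoetherianRing R]
    [IsDomain R] {x : R} (hx : ¬IsUnit x) {J : Ideal R} (hJ : J ≠ ⊥) :
    ∃ (c : ℕ) (b : R), J ≤ span {x ^ c} ∧ x ^ c * b ∈ J ∧ b ∉ span {x} := by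
  obtain ⟨c, hJc, hJc1⟩ := exists_le_span_pow_not_le hx hJ
  obtain ⟨_, hJ', hnot⟩ := SetLike.not_le_iff_exists.1 hJc1
  obtain ⟨b, rfl⟩ := mem_span_singleton'.1 (hJc hJ')
  refine ⟨c, b, hJc, mul_comm b _ ▸ hJ', fun hb => hnot ?_⟩
  obtain ⟨d, rfl⟩ := mem_span_singleton'.1 hb
  exact mem_span_singleton'.2 ⟨d, by ring⟩

theorem Ideal.mem_sup_span_singleton_iff_apply_mem_map {S : Type*} [CommRing S] (φ : S →+* S)
    {ξ : S} (hξ : φ ξ = 0) (hφ : ∀ h, h - φ h ∈ span {ξ}) (L : Ideal S) (h : S) :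
    h ∈ L ⊔ span {ξ} ↔ φ h ∈ L.map φ := by
  constructor
  · intro hh
    obtain ⟨u, hu, v, hv, rfl⟩ := Submodule.mem_sup.1 hh
    obtain ⟨w, rfl⟩ := mem_span_singleton'.1 hv
    simpa [hξ] using mem_map_of_mem φ hu
  · intro hh
    have hmap : L.map φ ≤ L ⊔ span {ξ} := map_le_iff_le_comap.2 fun u hu => by
      simpa using Submodule.sub_mem_sup hu (hφ u)
    simpa using Submodule.add_mem_sup (hmap hh) (hφ h)

namespace MvPolynomial

variable {R σ τ : Type*} [CommRing R]

noncomputable def splitVars : MvPolynomial (σ ⊕ τ) R ≃ₐ[R] MvPolynomial τ (MvPolynomial σ R) :=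
  (renameEquiv R (Equiv.sumComm σ τ)).trans (sumAlgEquiv R τ σ)

@[simp]
theorem splitVars_rename_inl (p : MvPolynomial σ R) :
    splitVars (rename (Sum.inl (β := τ)) p) = C p := by
  induction p using MvPolynomial.induction_on <;> simp_all [splitVars]

@[simp]
theorem splitVars_symm_C (p : MvPolynomial σ R) :
    (splitVars (τ := τ)).symm (C p) = rename Sum.inl p := by
  rw [← splitVars_rename_inl, AlgEquiv.symm_apply_apply]

theorem map_rename_inl_eq_comap (M : Ideal (MvPolynomial σ R)) :
    M.map (rename (Sum.inl (β := τ))) = (M.map C).comap splitVars := by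
  refine le_antisymm (Ideal.map_le_iff_le_comap.2 fun f hf => ?_) fun h hh => ?_
  · show splitVars (rename Sum.inl f) ∈ M.map C
    rw [splitVars_rename_inl]
    exact Ideal.mem_map_of_mem C hf
  · have hle : M.map C ≤ (M.map (rename Sum.inl)).comap (splitVars (τ := τ)).symm :=
      Ideal.map_le_iff_le_comap.2 fun f hf => by
        show (splitVars (τ := τ)).symm (C f) ∈ M.map (rename Sum.inl)
        rw [splitVars_symm_C]
        exact Ideal.mem_map_of_mem _ hf
    simpa using hle (Ideal.mem_comap.1 hh)

theorem isPrime_map_rename_inl {M : Ideal (MvPolynomial σ R)} (hM : M.IsPrime) :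
    (M.map (rename (Sum.inl (β := τ)))).IsPrime := by
  rw [map_rename_inl_eq_comap, ← Ideal.mk_ker (I := M), ← ker_map]
  exact (RingHom.ker_isPrime _).comap _

theorem mem_map_rename_inl_iff_mul_mem {I 𝔭 : Ideal (MvPolynomial σ R)} {a : MvPolynomial σ R}
    (hcolon : ∀ f, f ∈ 𝔭 ↔ f * a ∈ I) (h : MvPolynomial (σ ⊕ τ) R) :
    h ∈ 𝔭.map (rename Sum.inl) ↔ h * rename Sum.inl a ∈ I.map (rename Sum.inl) := by
  simp only [map_rename_inl_eq_comap, Ideal.mem_comap, mem_map_C_iff, hcolon]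
  refine forall_congr' fun m => ?_
  rw [map_mul, splitVars_rename_inl, mul_comm (splitVars h), coeff_C_mul, mul_comm a]

section identify

variable [DecidableEq τ]

noncomputable def identify (i : σ) (j : τ) :
    MvPolynomial (σ ⊕ τ) R →ₐ[R] MvPolynomial (σ ⊕ τ) R :=
  rename (Sum.elim Sum.inl (Function.update Sum.inr j (Sum.inl i)))

variable (i : σ) (j : τ)

theorem identify_comp_rename_inl :
    (identify i j).comp (rename Sum.inl) = (rename Sum.inl : MvPolynomial σ R →ₐ[R] _) := by
  rw [identify, rename_comp_rename, Sum.elim_comp_inl]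

@[simp]
theorem identify_rename_inl (p : MvPolynomial σ R) :
    identify i j (rename Sum.inl p) = rename Sum.inl p :=
  AlgHom.congr_fun (identify_comp_rename_inl i j) p

theorem identify_identify (p : MvPolynomial (σ ⊕ τ) R) :
    identify i j (identify i j p) = identify i j p := by
  have hidem : Sum.elim Sum.inl (Function.update Sum.inr j (Sum.inl i)) ∘
      Sum.elim Sum.inl (Function.update Sum.inr j (Sum.inl i)) =
      Sum.elim (Sum.inl (β := τ)) (Function.update Sum.inr j (Sum.inl i)) := by
    ext (m | t)
    · rfl
    · by_cases ht : t = j <;> simp [ht]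
  rw [identify, rename_rename, hidem]

theorem identify_X_sub_X : identify (R := R) i j (X (Sum.inl i) - X (Sum.inr j)) = 0 := by
  simp [identify]

theorem sub_identify_mem (p : MvPolynomial (σ ⊕ τ) R) :
    p - identify i j p ∈ Ideal.span {X (Sum.inl i) - X (Sum.inr j)} := by
  refine sub_mem_of_forall_X_sub_mem _ (fun n => ?_) p
  rcases n with m | t
  · simp [identify]
  · by_cases ht : t = j
    · subst ht
      rw [show X (Sum.inr t) - identify i t (X (Sum.inr t)) = -(X (Sum.inl i) - X (Sum.inr t)) by
        simp [identify]]
      exact neg_mem (Ideal.mem_span_singleton_self _)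
    · simp [identify, ht]

theorem mem_sup_span_iff_identify_mem (L : Ideal (MvPolynomial (σ ⊕ τ) R))
    (h : MvPolynomial (σ ⊕ τ) R) :
    h ∈ L ⊔ Ideal.span {X (Sum.inl i) - X (Sum.inr j)} ↔ identify i j h ∈ L.map (identify i j) :=
  Ideal.mem_sup_span_singleton_iff_apply_mem_map (identify i j).toRingHom
    (identify_X_sub_X i j) (sub_identify_mem i j) L h

theorem map_identify_map_rename_inl (M : Ideal (MvPolynomial σ R)) :
    (M.map (rename (Sum.inl (β := τ)))).map (identify i j) = M.map (rename Sum.inl) := by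
  rw [Ideal.map_mapₐ, identify_comp_rename_inl]

theorem identify_rename_inr_notMem {𝔭 : Ideal (MvPolynomial σ R)}
    (h𝔭 : 𝔭 ≤ RingHom.ker (constantCoeff : MvPolynomial σ R →+* R)) {b : MvPolynomial τ R}
    (hb : b ∉ Ideal.span {X j}) : identify i j (rename Sum.inr b) ∉ 𝔭.map (rename Sum.inl) := by
  let ε : MvPolynomial (σ ⊕ τ) R →ₐ[R] MvPolynomial τ R :=
    aeval (Sum.elim 0 (Function.update X j 0))
  let ζ : MvPolynomial τ R →ₐ[R] MvPolynomial τ R := aeval (Function.update X j 0)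
  have hker : 𝔭.map (rename Sum.inl) ≤ RingHom.ker ε :=
    Ideal.map_le_iff_le_comap.2 fun f hf => by
      show ε (rename Sum.inl f) = 0
      rw [aeval_rename, Sum.elim_comp_inl, aeval_zero, RingHom.mem_ker.1 (h𝔭 hf), map_zero]
  have hεζ : (ε.comp (identify i j)).comp (rename Sum.inr) = ζ :=
    algHom_ext fun t => by by_cases ht : t = j <;> simp [ε, ζ, identify, ht]
  have hζ : b - ζ b ∈ Ideal.span {X j} :=
    sub_mem_of_forall_X_sub_mem ζ (fun t => by by_cases ht : t = j <;> simp [ζ, ht]) b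
  intro hmem
  have hζb : ζ b = 0 := by rw [← hεζ]; exact hker hmem
  exact hb (by simpa [hζb] using hζ)

theorem map_identify_map_rename_inr_le {J : Ideal (MvPolynomial τ R)} {c : ℕ}
    (hJ : J ≤ Ideal.span {X j ^ c}) :
    (J.map (rename (Sum.inr (α := σ)))).map (identify i j) ≤ Ideal.span {X (Sum.inl i) ^ c} :=
  calc _ ≤ ((Ideal.span {X j ^ c}).map (rename (Sum.inr (α := σ)))).map (identify i j) :=
        Ideal.map_mono (Ideal.map_mono hJ)
    _ = _ := by simp [Ideal.map_span, identify]

theorem isPrime_map_rename_inl_sup_span {𝔭 : Ideal (MvPolynomial σ R)} (h𝔭 : 𝔭.IsPrime) :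
    (𝔭.map (rename Sum.inl) ⊔ Ideal.span {X (Sum.inl i) - X (Sum.inr j)}).IsPrime := by
  have h : 𝔭.map (rename Sum.inl) ⊔ Ideal.span {X (Sum.inl i) - X (Sum.inr j)} =
      (𝔭.map (rename Sum.inl)).comap (identify i j) := by
    ext h
    rw [mem_sup_span_iff_identify_mem, map_identify_map_rename_inl, Ideal.mem_comap]
  exact h ▸ (isPrime_map_rename_inl h𝔭).comap _

variable [IsDomain R] {I 𝔭 : Ideal (MvPolynomial σ R)} {J : Ideal (MvPolynomial τ R)}
  {a : MvPolynomial σ R} {b : MvPolynomial τ R} {c : ℕ}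

theorem mem_map_rename_inl_iff_mul_mem_mul (h𝔭 : 𝔭.IsPrime)
    (h𝔭0 : 𝔭 ≤ RingHom.ker (constantCoeff : MvPolynomial σ R →+* R))
    (hcolon : ∀ f, f ∈ 𝔭 ↔ f * a ∈ I) (hJ : J ≤ Ideal.span {X j ^ c}) (hb : X j ^ c * b ∈ J)
    (hbX : b ∉ Ideal.span {X j}) (h : MvPolynomial (σ ⊕ τ) R) :
    h ∈ 𝔭.map (rename Sum.inl) ↔
      h * (rename Sum.inl a * identify i j (rename Sum.inr (X j ^ c * b))) ∈
        I.map (rename Sum.inl) * (J.map (rename Sum.inr)).map (identify i j) := by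
  set β := identify i j (rename Sum.inr b)
  have hxβ : identify i j (rename Sum.inr (X j ^ c * b)) = X (Sum.inl i) ^ c * β := by
    simp [β, identify]
  rw [hxβ]
  constructor
  · intro hh
    have hxβJ : X (Sum.inl i) ^ c * β ∈ (J.map (rename Sum.inr)).map (identify i j) :=
      hxβ ▸ Ideal.mem_map_of_mem _ (Ideal.mem_map_of_mem _ hb)
    simpa only [mul_assoc] using
      Ideal.mul_mem_mul ((mem_map_rename_inl_iff_mul_mem hcolon h).1 hh) hxβJ
  · intro hh
    have hle : I.map (rename Sum.inl) * (J.map (rename Sum.inr)).map (identify i j) ≤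
        Ideal.span {X (Sum.inl i) ^ c} * I.map (rename Sum.inl) :=
      calc _ ≤ I.map (rename Sum.inl) * Ideal.span {X (Sum.inl i) ^ c} :=
            Ideal.mul_mono_right (map_identify_map_rename_inr_le i j hJ)
        _ = _ := mul_comm _ _
    obtain ⟨z, hz, hzh⟩ := Ideal.mem_span_singleton_mul.1 (hle hh)
    have hβ : h * β * rename Sum.inl a ∈ I.map (rename Sum.inl) := by
      convert hz using 1
      refine mul_left_cancel₀ (pow_ne_zero c (X_ne_zero (Sum.inl i))) ?_
      rw [hzh]
      ring
    exact ((isPrime_map_rename_inl h𝔭).mem_or_mem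
      ((mem_map_rename_inl_iff_mul_mem hcolon _).2 hβ)).resolve_right
        (identify_rename_inr_notMem i j h𝔭0 hbX)

theorem mem_map_rename_inl_sup_span_iff_mul_mem (h𝔭 : 𝔭.IsPrime)
    (h𝔭0 : 𝔭 ≤ RingHom.ker (constantCoeff : MvPolynomial σ R →+* R))
    (hcolon : ∀ f, f ∈ 𝔭 ↔ f * a ∈ I) (hJ : J ≤ Ideal.span {X j ^ c}) (hb : X j ^ c * b ∈ J)
    (hbX : b ∉ Ideal.span {X j}) (h : MvPolynomial (σ ⊕ τ) R) :
    h ∈ 𝔭.map (rename Sum.inl) ⊔ Ideal.span {X (Sum.inl i) - X (Sum.inr j)} ↔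
      h * (rename Sum.inl a * identify i j (rename Sum.inr (X j ^ c * b))) ∈
        I.map (rename Sum.inl) * J.map (rename Sum.inr) ⊔
          Ideal.span {X (Sum.inl i) - X (Sum.inr j)} := by
  rw [mem_sup_span_iff_identify_mem, mem_sup_span_iff_identify_mem, map_mul, map_mul,
    identify_identify, identify_rename_inl, Ideal.map_mul,
    map_identify_map_rename_inl, map_identify_map_rename_inl]
  exact mem_map_rename_inl_iff_mul_mem_mul i j h𝔭 h𝔭0 hcolon hJ hb hbX _

end identify

end MvPolynomial

theorem stmt8_general {k : Type*} [Field k] {r s : ℕ}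
    (I : Ideal (MvPolynomial (Fin r) k)) (J : Ideal (MvPolynomial (Fin s) k))
    (hIh : IsHomogIdeal I)
    (hJ0 : J ≠ ⊥)
    (i : Fin r) (j : Fin s) :
    letI R := MvPolynomial (Fin r ⊕ Fin s) k
    letI ξ : R := X (Sum.inl i) - X (Sum.inr j)
    {P | ∃ 𝔭 ∈ associatedPrimes (MvPolynomial (Fin r) k) (MvPolynomial (Fin r) k ⧸ I),
          P = extA (s := s) 𝔭 ⊔ Ideal.span {ξ}} ⊆
      associatedPrimes R (R ⧸ (extA (s := s) I * extB (r := r) J ⊔ Ideal.span {ξ})) := by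
  unfold extA extB
  rintro _ ⟨𝔭, h𝔭, rfl⟩
  obtain ⟨h𝔭prime, a, hcolon⟩ := mem_associatedPrimes_quotient_iff.1 h𝔭
  obtain ⟨c, b, hJc, hb, hbX⟩ := Ideal.exists_pow_mul_mem_of_ne_bot X_prime.not_isUnit hJ0
  have h𝔭0 := hIh.le_ker_constantCoeff h𝔭prime.ne_top hcolon
  exact mem_associatedPrimes_quotient_iff.2 ⟨isPrime_map_rename_inl_sup_span i j h𝔭prime, _,
    mem_map_rename_inl_sup_span_iff_mul_mem i j h𝔭prime h𝔭0 hcolon hJc hb hbX⟩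

theorem stmt8 {k : Type*} [Field k] {r s : ℕ}
    (I : Ideal (MvPolynomial (Fin r) k)) (J : Ideal (MvPolynomial (Fin s) k))
    (hI0 : I ≠ ⊥) (hI1 : I ≠ ⊤) (hIh : IsHomogIdeal I)
    (hJ0 : J ≠ ⊥) (hJ1 : J ≠ ⊤) (hJh : IsHomogIdeal J)
    (i : Fin r) (j : Fin s) :
    letI R := MvPolynomial (Fin r ⊕ Fin s) k
    letI ξ : R := X (Sum.inl i) - X (Sum.inr j)
    {P | ∃ 𝔭 ∈ associatedPrimes (MvPolynomial (Fin r) k) (MvPolynomial (Fin r) k ⧸ I),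
          P = extA (s := s) 𝔭 ⊔ Ideal.span {ξ}} ⊆
      associatedPrimes R (R ⧸ (extA (s := s) I * extB (r := r) J ⊔ Ideal.span {ξ})) :=
  stmt8_general I J hIh hJ0 i j
end

section
/- Under the hypotheses that $I \subseteq k[x_1,\dots,x_r]$ ($r \geq 3$) is a proper monomial ideal with $x_3,\dots,x_r \in \sqrt{I}$ and $J \subseteq k[y_1,\dots,y_s]$ ($s \geq 3$) is a proper monomial ideal with $y_3,\dots,y_s \in \sqrt{J}$, and that $\operatorname{depth} A/I^n > 0$ or $\operatorname{depth} B/J^n > 0$ for a given $n \geq 1$, the element $x_2 - y_2$ is a non-zerodivisor on $R/((IJ)^n, x_1 - y_1)$, where $R = k[x_1,\dots,x_r,y_1,\dots,y_s]$. -/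
/-!
Substituting `x₁` for `y₁` turns membership modulo `(IJ)ⁿ + (x₁ - y₁)` into membership in the
image `N` of `(IJ)ⁿ`, again a monomial ideal, and fixes `x₂ - y₂`; so it suffices to show that
`x₂ - y₂` is a non-zerodivisor modulo `N`.

Suppose `(x₂ - y₂) f ∈ N`, where `f ≠ 0` has no monomial in `N`. On a line of exponents parallel to
`e(x₂) - e(y₂)` through the support of `f`, let `v + E e(x₂)` and `v + E e(y₂)` be the extreme
support points. The coefficients of `(x₂ - y₂) f` one step further out do not cancel, so
`v + (E+1) e(x₂)` and `v + (E+1) e(y₂)` are exponents of `N`. The monomials of `N` are the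
`xᵘ yᵛ` with `xᵘ ∈ Iⁿ`, `yᵛ ∈ Jⁿ`, up to splitting the exponent of the glued variable between
the factors. If `depth A/Iⁿ > 0` then `Iⁿ` has no socle monomial; as `x₃, …, x_r` are nilpotent
modulo `Iⁿ`, a monomial `m` with `x₂ m ∈ Iⁿ` and `x₁ᶜ m ∈ Iⁿ` lies in `Iⁿ` itself. Comparing the
factorizations of the two exponents this gives `v + E e(x₂) ∈ N`, a contradiction; the case of `J`
is symmetric.
-/

open MvPolynomial

/-- An ideal of a polynomial ring is a monomial ideal if it is generated by monomials. -/
def IsMonomialIdeal {k : Type*} [Field k] {σ : Type*} (I : Ideal (MvPolynomial σ k)) : Prop :=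
  ∃ s : Set (σ →₀ ℕ), I = Ideal.span ((fun d => MvPolynomial.monomial d (1 : k)) '' s)

open Finsupp
open scoped Pointwise

section MonomialIdeal

variable {R σ τ : Type*} [CommSemiring R]

theorem monomial_mem_of_le {P : Ideal (MvPolynomial σ R)} {e d : σ →₀ ℕ}
    (he : monomial e (1 : R) ∈ P) (hle : e ≤ d) : monomial d (1 : R) ∈ P := by
  rw [← tsub_add_cancel_of_le hle, ← one_mul (1 : R), ← monomial_mul]
  exact P.mul_mem_left _ he

theorem mem_of_forall_monomial_mem {P : Ideal (MvPolynomial σ R)} {p : MvPolynomial σ R}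
    (h : ∀ d ∈ p.support, monomial d (1 : R) ∈ P) : p ∈ P := by
  rw [p.as_sum]
  refine P.sum_mem fun d hd => ?_
  rw [← mul_one (coeff d p), ← C_mul_monomial]
  exact P.mul_mem_left _ (h d hd)

theorem monomial_mem_span_monomial_iff [Nontrivial R] {S : Set (σ →₀ ℕ)} {d : σ →₀ ℕ} :
    monomial d (1 : R) ∈ Ideal.span ((fun s => monomial s (1 : R)) '' S) ↔ ∃ s ∈ S, s ≤ d := by
  classical
  rw [mem_ideal_span_monomial_image, support_monomial, if_neg one_ne_zero]
  simp

theorem span_monomial_mul_span_monomial (S S' : Set (σ →₀ ℕ)) :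
    Ideal.span ((fun s => monomial s (1 : R)) '' S) * Ideal.span ((fun s => monomial s 1) '' S') =
      Ideal.span ((fun s => monomial s 1) '' (S + S')) := by
  rw [Ideal.span_mul_span', ← Set.image2_mul, Set.image2_image_left, Set.image2_image_right,
    ← Set.image2_add, Set.image_image2]
  simp only [monomial_mul, one_mul]

theorem map_rename_span_monomial (g : σ → τ) (S : Set (σ →₀ ℕ)) :
    (Ideal.span ((fun s => monomial s (1 : R)) '' S)).map (rename g) =
      Ideal.span ((fun s => monomial s 1) '' (mapDomain g '' S)) := by
  rw [Ideal.map_span, Set.image_image, Set.image_image]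
  simp only [rename_monomial]

theorem exists_socle_monomial [Finite σ] {P : Ideal (MvPolynomial σ R)} {w : σ →₀ ℕ}
    (hw : monomial w (1 : R) ∉ P) (h : ∀ i, ∃ c, monomial (w + single i c) (1 : R) ∈ P) :
    ∃ w', monomial w' (1 : R) ∉ P ∧ ∀ i, monomial (w' + single i 1) (1 : R) ∈ P := by
  classical
  -- A monomial of maximal degree outside `P` in the box `[w, B]` is a socle monomial.
  choose c hc using h
  let B := w + equivFunOnFinite.symm c
  obtain ⟨w', hw', hmax⟩ := ((Finset.Icc w B).filter (monomial · (1 : R) ∉ P)).exists_max_image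
    degree ⟨w, by simp [hw, B]⟩
  simp only [Finset.mem_filter, Finset.mem_Icc] at hw' hmax
  obtain ⟨⟨hww', hw'B⟩, hw'P⟩ := hw'
  refine ⟨w', hw'P, fun i => by_contra fun hi => ?_⟩
  have hle : w' + single i 1 ≤ B := fun j => by
    rcases eq_or_ne j i with rfl | hj
    · by_contra! hlt
      refine hw'P (monomial_mem_of_le (hc j) fun l => ?_)
      rcases eq_or_ne l j with rfl | hl
      · simp only [B, Finsupp.add_apply, coe_equivFunOnFinite_symm, single_eq_same] at hlt ⊢
        omega
      · simpa [hl] using hww' l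
    · simpa [hj] using hw'B j
  have := hmax _ ⟨⟨hww'.trans le_self_add, hle⟩, hi⟩
  simp at this

namespace IsMonomialIdeal

variable {k : Type*} [Field k] {P Q : Ideal (MvPolynomial σ k)}

theorem monomial_mem {p : MvPolynomial σ k} (hP : IsMonomialIdeal P) (hp : p ∈ P) {d : σ →₀ ℕ}
    (hd : d ∈ p.support) : monomial d (1 : k) ∈ P := by
  obtain ⟨S, rfl⟩ := hP
  obtain ⟨s, hs, hle⟩ := mem_ideal_span_monomial_image.mp hp d hd
  exact monomial_mem_of_le (Ideal.subset_span ⟨s, hs, rfl⟩) hle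

theorem eq_span (hP : IsMonomialIdeal P) :
    P = Ideal.span ((fun s => monomial s (1 : k)) '' {d | monomial d (1 : k) ∈ P}) := by
  refine le_antisymm (fun p hp => mem_of_forall_monomial_mem fun d hd => ?_) ?_
  · exact Ideal.subset_span (Set.mem_image_of_mem _ (hP.monomial_mem hp hd))
  · rw [Ideal.span_le]
    rintro _ ⟨d, hd, rfl⟩
    exact hd

theorem mul (hP : IsMonomialIdeal P) (hQ : IsMonomialIdeal Q) : IsMonomialIdeal (P * Q) := by
  obtain ⟨S, rfl⟩ := hP
  obtain ⟨S', rfl⟩ := hQ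
  exact ⟨S + S', span_monomial_mul_span_monomial S S'⟩

theorem pow (hP : IsMonomialIdeal P) (n : ℕ) : IsMonomialIdeal (P ^ n) := by
  induction n with
  | zero =>
    refine ⟨{0}, ?_⟩
    rw [pow_zero, Set.image_singleton, monomial_zero', C_1, Ideal.span_singleton_one,
      Ideal.one_eq_top]
  | succ n ih => rw [pow_succ]; exact ih.mul hP

theorem map_rename (hP : IsMonomialIdeal P) (g : σ → τ) :
    IsMonomialIdeal (P.map (rename g : MvPolynomial σ k →ₐ[k] MvPolynomial τ k)) := by
  obtain ⟨S, rfl⟩ := hP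
  exact ⟨_, map_rename_span_monomial g S⟩

end IsMonomialIdeal

end MonomialIdeal

section Depth

theorem idealDepth_eq_zero_of_smul_eq_zero {R M : Type*} [CommRing R] [AddCommGroup M]
    [Module R M] {𝔪 : Ideal R} {x : M} (hx : x ≠ 0) (h : ∀ r ∈ 𝔪, r • x = 0) :
    idealDepth 𝔪 M = 0 := by
  refine Nat.le_zero.mp (csSup_le' ?_)
  rintro _ ⟨_ | ⟨r, rs⟩, rfl, hmem, hreg⟩
  · exact le_rfl
  · have hr : IsSMulRegular M r :=
      ((RingTheory.Sequence.isWeaklyRegular_cons_iff M r rs).mp hreg.toIsWeaklyRegular).1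
    exact (hx (hr (show r • x = r • 0 by rw [h r (hmem r List.mem_cons_self), smul_zero]))).elim

variable {k σ : Type*} [Field k]

theorem polyDepth_eq_zero_of_monomial {P : Ideal (MvPolynomial σ k)} {w : σ →₀ ℕ}
    (hw : monomial w (1 : k) ∉ P) (h : ∀ i, monomial (w + single i 1) (1 : k) ∈ P) :
    polyDepth P = 0 := by
  refine idealDepth_eq_zero_of_smul_eq_zero (x := Submodule.Quotient.mk (monomial w 1))
    (by rwa [Ne, Submodule.Quotient.mk_eq_zero]) fun r hr => ?_
  have hcolon : Ideal.span (Set.range X) ≤ P.colon (Ideal.span {monomial w (1 : k)}) := by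
    refine Ideal.span_le.mpr ?_
    rintro _ ⟨i, rfl⟩
    rw [SetLike.mem_coe, Ideal.mem_colon_span_singleton, X, monomial_mul, one_mul, add_comm]
    exact h i
  rw [← Submodule.Quotient.mk_smul, Submodule.Quotient.mk_eq_zero]
  exact Ideal.mem_colon_span_singleton.mp (hcolon hr)

variable [Finite σ]

theorem monomial_mem_of_polyDepth_pos {P : Ideal (MvPolynomial σ k)} (hP : 0 < polyDepth P)
    {w : σ →₀ ℕ} (h : ∀ i, ∃ c, monomial (w + single i c) (1 : k) ∈ P) :
    monomial w (1 : k) ∈ P := by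
  by_contra hw
  obtain ⟨w', hw'P, hw'⟩ := exists_socle_monomial hw h
  exact hP.ne' (polyDepth_eq_zero_of_monomial hw'P hw')

theorem monomial_update_mem_of_polyDepth_pos
    {P : Ideal (MvPolynomial σ k)} (hP : 0 < polyDepth P) {a₀ a₁ : σ} (ha : a₀ ≠ a₁)
    (hrad : ∀ i, i ≠ a₀ → i ≠ a₁ → X i ∈ P.radical) {w : σ →₀ ℕ} {E c c' : ℕ}
    (h₁ : monomial ((w + single a₁ (E + 1)).update a₀ c) (1 : k) ∈ P)
    (h₀ : monomial (w.update a₀ c') (1 : k) ∈ P) :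
    monomial ((w + single a₁ E).update a₀ c) (1 : k) ∈ P := by
  classical
  refine monomial_mem_of_polyDepth_pos hP fun i => ?_
  by_cases hi₁ : i = a₁
  · subst hi₁
    refine ⟨1, monomial_mem_of_le h₁ fun j => ?_⟩
    rcases eq_or_ne j a₀ with rfl | hj
    · simp [ha]
    · simp only [Finsupp.add_apply, update_apply, hj, if_false, single_apply]
      split_ifs <;> omega
  by_cases hi₀ : i = a₀
  · subst hi₀
    refine ⟨c', monomial_mem_of_le h₀ fun j => ?_⟩
    rcases eq_or_ne j i with rfl | hj
    · simp [update_apply]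
    · simp only [Finsupp.add_apply, update_apply, hj, if_false, single_apply]
      split_ifs <;> omega
  obtain ⟨m, hm⟩ := hrad i hi₀ hi₁
  rw [X_pow_eq_monomial] at hm
  exact ⟨m, monomial_mem_of_le hm le_add_self⟩

end Depth

section Segment

variable {R σ : Type*} [DecidableEq σ]

theorem Finsupp.mapDomain_update_id [AddCommMonoid R] (a b : σ) (e : σ →₀ R) :
    mapDomain (Function.update id a b) e = e.erase a + single b (e a) := by
  conv_lhs => rw [← erase_add_single a e]
  rw [mapDomain_add, mapDomain_single, Function.update_self]
  congr 1
  refine (mapDomain_congr fun x hx => ?_).trans mapDomain_id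
  exact Function.update_of_ne (by rintro rfl; simp at hx) _ _

theorem Finsupp.mapDomain_update_id_add_single_self [AddCommMonoid R] (a b : σ) (e : σ →₀ R)
    (c : R) : mapDomain (Function.update id a b) (e + single a c) =
      mapDomain (Function.update id a b) e + single b c := by
  rw [mapDomain_add, mapDomain_single, Function.update_self]

theorem Finsupp.mapDomain_update_id_add_single_of_ne [AddCommMonoid R] {a b : σ} (hab : a ≠ b)
    (e : σ →₀ R) (c : R) : mapDomain (Function.update id a b) (e + single b c) =
      mapDomain (Function.update id a b) e + single b c := by
  rw [mapDomain_add, mapDomain_single, Function.update_of_ne hab.symm, id]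

theorem Finsupp.eq_of_mapDomain_update_id_eq [AddCancelCommMonoid R] {a b : σ} {e e' : σ →₀ R}
    (h : mapDomain (Function.update id a b) e = mapDomain (Function.update id a b) e')
    (ha : e a = e' a) : e = e' := by
  rw [mapDomain_update_id, mapDomain_update_id, ha] at h
  ext c
  rcases eq_or_ne c a with rfl | hc
  · exact ha
  · simpa [hc] using DFunLike.congr_fun (add_right_cancel h) c

variable [CommRing R]

theorem MvPolynomial.exists_mem_support_of_coeff_X_mul_ne_zero {f : MvPolynomial σ R}
    {m : σ →₀ ℕ} {c : σ} (h : coeff m (X c * f) ≠ 0) : ∃ e ∈ f.support, e + single c 1 = m := by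
  rw [coeff_X_mul'] at h
  split_ifs at h with hc
  · refine ⟨m - single c 1, mem_support_iff.mpr h, tsub_add_cancel_of_le ?_⟩
    rwa [single_le_iff, Nat.one_le_iff_ne_zero, ← Finsupp.mem_support_iff]
  · exact absurd rfl h

theorem MvPolynomial.coeff_X_sub_X_mul_add_single_left {a b : σ} (hab : a ≠ b)
    {f : MvPolynomial σ R} {e : σ →₀ ℕ}
    (he : ∀ e' ∈ f.support, mapDomain (Function.update id a b) e' =
      mapDomain (Function.update id a b) e → e' a ≤ e a) :
    coeff (e + single a 1) ((X a - X b) * f) = coeff e f := by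
  rw [sub_mul, coeff_sub, add_comm, coeff_X_mul, sub_eq_self]
  by_contra h
  obtain ⟨e', he', hee'⟩ := exists_mem_support_of_coeff_X_mul_ne_zero h
  have hπ : mapDomain (Function.update id a b) e' = mapDomain (Function.update id a b) e :=
    add_right_cancel (b := single b 1) (by
      rw [← mapDomain_update_id_add_single_of_ne hab, hee', add_comm,
        mapDomain_update_id_add_single_self])
  have := DFunLike.congr_fun hee' a
  rw [Finsupp.add_apply, Finsupp.add_apply, single_eq_same, single_eq_of_ne hab] at this
  have := he e' he' hπ
  omega

theorem MvPolynomial.coeff_X_sub_X_mul_add_single_right {a b : σ} (hab : a ≠ b)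
    {f : MvPolynomial σ R} {e : σ →₀ ℕ}
    (he : ∀ e' ∈ f.support, mapDomain (Function.update id a b) e' =
      mapDomain (Function.update id a b) e → e a ≤ e' a) :
    coeff (e + single b 1) ((X a - X b) * f) = - coeff e f := by
  rw [sub_mul, coeff_sub, add_comm, coeff_X_mul, sub_eq_neg_self]
  by_contra h
  obtain ⟨e', he', hee'⟩ := exists_mem_support_of_coeff_X_mul_ne_zero h
  have hπ : mapDomain (Function.update id a b) e' = mapDomain (Function.update id a b) e :=
    add_right_cancel (b := single b 1) (by
      rw [← mapDomain_update_id_add_single_self, hee', add_comm,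
        mapDomain_update_id_add_single_of_ne hab])
  have := DFunLike.congr_fun hee' a
  rw [Finsupp.add_apply, Finsupp.add_apply, single_eq_same, single_eq_of_ne hab] at this
  have := he e' he' hπ
  omega

theorem MvPolynomial.exists_segment_of_ne_zero {a b : σ} (hab : a ≠ b) {f : MvPolynomial σ R}
    (hf : f ≠ 0) : ∃ v E, v + single a E ∈ f.support ∧ v + single b E ∈ f.support ∧
      v + single a (E + 1) ∈ ((X a - X b) * f).support ∧
      v + single b (E + 1) ∈ ((X a - X b) * f).support := by
  -- The fibres of `π` are the lines parallel to `single a 1 - single b 1`.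
  let π : (σ →₀ ℕ) → σ →₀ ℕ := mapDomain (Function.update id a b)
  obtain ⟨d, hd⟩ := support_nonempty.mpr hf
  let L := f.support.filter (π · = π d)
  have hL : L.Nonempty := ⟨d, Finset.mem_filter.mpr ⟨hd, rfl⟩⟩
  obtain ⟨emax, hemax, hmax⟩ := L.exists_max_image (· a) hL
  obtain ⟨emin, hemin, hmin⟩ := L.exists_min_image (· a) hL
  simp only [L, Finset.mem_filter] at hemax hemin hmax hmin
  set E := emax a - emin a
  have hva : emax - single a E + single a E = emax :=
    tsub_add_cancel_of_le (single_le_iff.mpr (Nat.sub_le _ _))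
  have hvb : emax - single a E + single b E = emin := by
    refine eq_of_mapDomain_update_id_eq (a := a) (b := b) ?_ ?_
    · rw [mapDomain_update_id_add_single_of_ne hab, ← mapDomain_update_id_add_single_self, hva]
      exact hemax.2.trans hemin.2.symm
    · have := hmax emin hemin
      rw [Finsupp.add_apply, tsub_apply, single_eq_same, single_eq_of_ne hab]
      omega
  refine ⟨emax - single a E, E, by rw [hva]; exact hemax.1, by rw [hvb]; exact hemin.1, ?_, ?_⟩
  · rw [mem_support_iff, single_add, ← add_assoc, hva,
      coeff_X_sub_X_mul_add_single_left hab fun e he hπ => hmax e ⟨he, hπ.trans hemax.2⟩]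
    exact mem_support_iff.mp hemax.1
  · rw [mem_support_iff, single_add, ← add_assoc, hvb,
      coeff_X_sub_X_mul_add_single_right hab fun e he hπ => hmin e ⟨he, hπ.trans hemin.2⟩,
      neg_ne_zero]
    exact mem_support_iff.mp hemin.1

end Segment

section Regular

variable {k σ : Type*} [Field k]

def SegmentCondition (N : Ideal (MvPolynomial σ k)) (a b : σ) : Prop :=
  ∀ v E, monomial (v + single a (E + 1)) (1 : k) ∈ N → monomial (v + single b (E + 1)) (1 : k) ∈ N →
    monomial (v + single a E) (1 : k) ∈ N ∨ monomial (v + single b E) (1 : k) ∈ N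

theorem IsMonomialIdeal.mem_of_X_sub_X_mul_mem {N : Ideal (MvPolynomial σ k)}
    (hN : IsMonomialIdeal N) {a b : σ} (hab : a ≠ b) (hseg : SegmentCondition N a b)
    {f : MvPolynomial σ k} (h : (X a - X b) * f ∈ N) : f ∈ N := by
  classical
  let g := ∑ d ∈ f.support with monomial d (1 : k) ∉ N, monomial d (coeff d f)
  have hg : ∀ d ∈ g.support, monomial d (1 : k) ∉ N := by
    intro d hd
    rw [MvPolynomial.mem_support_iff, coeff_sum] at hd
    simp only [coeff_monomial, Finset.sum_ite_eq', Finset.mem_filter] at hd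
    by_contra hdN
    exact hd (if_neg fun h => h.2 hdN)
  have hfg : f - g ∈ N := by
    rw [sub_eq_iff_eq_add.mpr (f.as_sum.trans (Finset.sum_filter_add_sum_filter_not _
      (fun d => monomial d (1 : k) ∈ N) _).symm)]
    refine N.sum_mem fun d hd => ?_
    rw [← mul_one (coeff d f), ← C_mul_monomial]
    exact N.mul_mem_left _ (Finset.mem_filter.mp hd).2
  suffices g = 0 by rwa [this, sub_zero] at hfg
  by_contra hg0
  obtain ⟨v, E, hva, hvb, hva', hvb'⟩ := exists_segment_of_ne_zero hab hg0
  have hXg : (X a - X b) * g ∈ N := by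
    have := N.sub_mem h (N.mul_mem_left (X a - X b) hfg)
    rwa [mul_sub, sub_sub_cancel] at this
  rcases hseg v E (hN.monomial_mem hXg hva') (hN.monomial_mem hXg hvb') with hv | hv
  exacts [hg _ hva hv, hg _ hvb hv]

end Regular

section Collapse

variable {k σ : Type*} [Field k] [DecidableEq σ]

theorem rename_update_id_sub_mem (a b : σ) (f : MvPolynomial σ k) :
    rename (Function.update id b a) f - f ∈ Ideal.span {X a - X b} := by
  have h : (Ideal.Quotient.mkₐ k (Ideal.span {X a - X b})).comp (rename (Function.update id b a)) =
      Ideal.Quotient.mkₐ k _ := by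
    refine algHom_ext fun i => ?_
    by_cases hi : i = b
    · subst hi
      simp [Ideal.Quotient.eq]
    · simp [Function.update_of_ne hi]
  exact Ideal.Quotient.eq.mp (DFunLike.congr_fun h f)

theorem mem_sup_span_X_sub_X_iff (M : Ideal (MvPolynomial σ k)) (a b : σ) (f : MvPolynomial σ k) :
    f ∈ M ⊔ Ideal.span {X a - X b} ↔
      rename (Function.update id b a) f ∈
        M.map (rename (Function.update id b a) : MvPolynomial σ k →ₐ[k] MvPolynomial σ k) := by
  have hsub (p : MvPolynomial σ k) : rename (Function.update id b a) p - p ∈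
      M ⊔ Ideal.span {X a - X b} :=
    Ideal.mem_sup_right (rename_update_id_sub_mem a b p)
  constructor
  · intro hf
    obtain ⟨m, hm, l, hl, rfl⟩ := Submodule.mem_sup.mp hf
    obtain ⟨c, rfl⟩ := Ideal.mem_span_singleton'.mp hl
    have : rename (Function.update id b a) (X a - X b : MvPolynomial σ k) = 0 := by
      by_cases hab : a = b
      · simp [hab]
      · simp [Function.update_of_ne hab]
    rw [map_add, map_mul, this, mul_zero, add_zero]
    exact Ideal.mem_map_of_mem _ hm
  · intro hf
    have hle : M.map (rename (Function.update id b a) : MvPolynomial σ k →ₐ[k] MvPolynomial σ k) ≤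
        M ⊔ Ideal.span {X a - X b} := by
      refine Ideal.map_le_iff_le_comap.mpr fun m hm => ?_
      simpa using Ideal.add_mem _ (hsub m) (Ideal.mem_sup_left hm)
    simpa using Ideal.sub_mem _ (hle hf) (hsub f)

theorem isSMulRegular_quotient_sup_span_X_sub_X {M : Ideal (MvPolynomial σ k)} {a b a' b' : σ}
    (ha' : a' ≠ b) (hb' : b' ≠ b)
    (h : ∀ f, (X a' - X b') * f ∈
        M.map (rename (Function.update id b a) : MvPolynomial σ k →ₐ[k] MvPolynomial σ k) →
      f ∈ M.map (rename (Function.update id b a) : MvPolynomial σ k →ₐ[k] MvPolynomial σ k)) :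
    IsSMulRegular (MvPolynomial σ k ⧸ (M ⊔ Ideal.span {X a - X b}))
      (X a' - X b' : MvPolynomial σ k) := by
  rw [isSMulRegular_quotient_iff_mem_of_smul_mem]
  intro f hf
  rw [smul_eq_mul, mem_sup_span_X_sub_X_iff, map_mul] at hf
  rw [mem_sup_span_X_sub_X_iff]
  refine h _ ?_
  simpa [Function.update_of_ne ha', Function.update_of_ne hb'] using hf

end Collapse

section Gluing

variable {k α β : Type*} [Field k]

theorem Finsupp.sumElim_le_sumElim_iff {x x' : α →₀ ℕ} {y y' : β →₀ ℕ} :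
    sumElim x y ≤ sumElim x' y' ↔ x ≤ x' ∧ y ≤ y' :=
  ⟨fun h => ⟨fun i => h (Sum.inl i), fun j => h (Sum.inr j)⟩,
    fun h => Sum.rec (fun i => h.1 i) (fun j => h.2 j)⟩

variable [DecidableEq α] [DecidableEq β]

theorem Finsupp.mapDomain_update_id_sumElim (a₀ : α) (b₀ : β) (u : α →₀ ℕ) (v : β →₀ ℕ) :
    mapDomain (Function.update id (Sum.inr b₀) (Sum.inl a₀)) (sumElim u v) =
      sumElim (u + single a₀ (v b₀)) (v.erase b₀) := by
  rw [mapDomain_update_id]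
  ext (i | j) <;> simp [single_apply, erase_apply]

theorem monomial_mem_map_rename_span_mul_iff (a₀ : α) (b₀ : β) (U : Set (α →₀ ℕ))
    (V : Set (β →₀ ℕ)) (d : α ⊕ β →₀ ℕ) :
    monomial d (1 : k) ∈
      ((Ideal.span ((fun s => monomial s (1 : k)) '' U)).map (rename Sum.inl) *
        (Ideal.span ((fun s => monomial s (1 : k)) '' V)).map (rename Sum.inr)).map
        (rename (Function.update id (Sum.inr b₀) (Sum.inl a₀))) ↔
      ∃ u ∈ U, ∃ v ∈ V,
        mapDomain (Function.update id (Sum.inr b₀) (Sum.inl a₀)) (sumElim u v) ≤ d := by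
  rw [map_rename_span_monomial, map_rename_span_monomial, span_monomial_mul_span_monomial,
    map_rename_span_monomial, monomial_mem_span_monomial_iff]
  simp [Set.mem_add, sumElim_eq_add]

/-- `c + c'` splits the exponent of the glued variable `X (inl a₀) = X (inr b₀)` between the
two factors. -/
theorem IsMonomialIdeal.monomial_sumElim_mem_map_rename_mul_iff {P : Ideal (MvPolynomial α k)}
    {Q : Ideal (MvPolynomial β k)} (hP : IsMonomialIdeal P) (hQ : IsMonomialIdeal Q) (a₀ : α)
    (b₀ : β) (x : α →₀ ℕ) (y : β →₀ ℕ) :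
    monomial (sumElim x y) (1 : k) ∈ (P.map (rename Sum.inl) * Q.map (rename Sum.inr)).map
        (rename (Function.update id (Sum.inr b₀) (Sum.inl a₀))) ↔
      ∃ c c', c + c' ≤ x a₀ ∧ monomial (x.update a₀ c) (1 : k) ∈ P ∧
        monomial (y.update b₀ c') (1 : k) ∈ Q := by
  conv_lhs => rw [hP.eq_span, hQ.eq_span, monomial_mem_map_rename_span_mul_iff]
  simp only [mapDomain_update_id_sumElim, sumElim_le_sumElim_iff, Set.mem_ofPred_eq]
  constructor
  · rintro ⟨u, hu, v, hv, hux, hvy⟩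
    refine ⟨u a₀, v b₀, by simpa using hux a₀, monomial_mem_of_le hu fun i => ?_,
      monomial_mem_of_le hv fun j => ?_⟩
    · rcases eq_or_ne i a₀ with rfl | hi
      · simp
      · simpa [update_apply, hi, single_apply, Ne.symm hi] using hux i
    · rcases eq_or_ne j b₀ with rfl | hj
      · simp
      · simpa [update_apply, hj] using hvy j
  · rintro ⟨c, c', hcc, hx, hy⟩
    refine ⟨_, hx, _, hy, fun i => ?_, fun j => ?_⟩
    · rcases eq_or_ne i a₀ with rfl | hi
      · simpa using hcc
      · simp [update_apply, hi]
    · rcases eq_or_ne j b₀ with rfl | hj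
      · simp
      · simp [hj]

theorem segmentCondition_map_rename_mul [Finite α] [Finite β] {P : Ideal (MvPolynomial α k)}
    {Q : Ideal (MvPolynomial β k)} (hP : IsMonomialIdeal P) (hQ : IsMonomialIdeal Q)
    {a₀ a₁ : α} {b₀ b₁ : β} (ha : a₀ ≠ a₁) (hb : b₀ ≠ b₁)
    (hPrad : ∀ i, i ≠ a₀ → i ≠ a₁ → X i ∈ P.radical)
    (hQrad : ∀ j, j ≠ b₀ → j ≠ b₁ → X j ∈ Q.radical)
    (hdepth : 0 < polyDepth P ∨ 0 < polyDepth Q) :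
    SegmentCondition ((P.map (rename Sum.inl) * Q.map (rename Sum.inr)).map
      (rename (Function.update id (Sum.inr b₀) (Sum.inl a₀)))) (Sum.inl a₁) (Sum.inr b₁) := by
  intro w E hx hy
  obtain ⟨x, y, rfl⟩ : ∃ x y, w = sumElim x y := ⟨_, _, (comapDomain_sumElim_comapDomain w).symm⟩
  simp only [← sumElim_single_zero, ← sumElim_zero_single, ← sumElim_add, add_zero,
    hP.monomial_sumElim_mem_map_rename_mul_iff hQ] at hx hy ⊢
  obtain ⟨c₁, c₁', hc₁, hx₁, hy₁⟩ := hx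
  obtain ⟨c₂, c₂', hc₂, hx₂, hy₂⟩ := hy
  rcases hdepth with hP | hQ
  · refine .inl ⟨c₁, c₁', by simpa [ha] using hc₁, ?_, hy₁⟩
    exact monomial_update_mem_of_polyDepth_pos hP ha hPrad hx₁ hx₂
  · exact .inr ⟨c₂, c₂', hc₂, hx₂, monomial_update_mem_of_polyDepth_pos hQ hb hQrad hy₂ hy₁⟩

end Gluing

theorem Ideal.radical_le_radical_pow {R : Type*} [CommSemiring R] (I : Ideal R) (n : ℕ) :
    I.radical ≤ (I ^ n).radical := fun _ ⟨t, ht⟩ =>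
  ⟨t * n, by rw [pow_mul]; exact Ideal.pow_mem_pow ht n⟩

theorem stmt10 {k : Type*} [Field k] {r s : ℕ} (hr : 3 ≤ r) (hs : 3 ≤ s)
    (I : Ideal (MvPolynomial (Fin r) k)) (J : Ideal (MvPolynomial (Fin s) k))
    (hIm : IsMonomialIdeal I)
    (hJm : IsMonomialIdeal J)
    (hIrad : ∀ i : Fin r, 2 ≤ (i : ℕ) → X i ∈ I.radical)
    (hJrad : ∀ j : Fin s, 2 ≤ (j : ℕ) → X j ∈ J.radical)
    (n : ℕ)
    (hdepth : 0 < polyDepth (I ^ n) ∨ 0 < polyDepth (J ^ n)) :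
    IsSMulRegular
      (MvPolynomial (Fin r ⊕ Fin s) k ⧸
        ((extA (s := s) I * extB (r := r) J) ^ n ⊔
          Ideal.span {X (Sum.inl (⟨0, by omega⟩ : Fin r)) - X (Sum.inr (⟨0, by omega⟩ : Fin s))}))
      (X (Sum.inl (⟨1, by omega⟩ : Fin r)) - X (Sum.inr (⟨1, by omega⟩ : Fin s))
        : MvPolynomial (Fin r ⊕ Fin s) k) := by
  have hrad {m : ℕ} {K : Ideal (MvPolynomial (Fin m) k)}
      (hK : ∀ i : Fin m, 2 ≤ (i : ℕ) → X i ∈ K.radical) (i : Fin m) (h₀ : (i : ℕ) ≠ 0)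
      (h₁ : (i : ℕ) ≠ 1) : X i ∈ (K ^ n).radical :=
    K.radical_le_radical_pow n (hK i (by omega))
  rw [mul_pow, extA, extB, ← Ideal.map_pow, ← Ideal.map_pow]
  refine isSMulRegular_quotient_sup_span_X_sub_X (by simp) (by simp) fun f hf => ?_
  refine IsMonomialIdeal.mem_of_X_sub_X_mul_mem ?_ (by simp) ?_ hf
  · exact (((hIm.pow n).map_rename _).mul ((hJm.pow n).map_rename _)).map_rename _
  · exact segmentCondition_map_rename_mul (hIm.pow n) (hJm.pow n) (by simp) (by simp)
      (fun i h₀ h₁ => hrad hIrad i (Fin.val_ne_of_ne h₀) (Fin.val_ne_of_ne h₁))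
      (fun j h₀ h₁ => hrad hJrad j (Fin.val_ne_of_ne h₀) (Fin.val_ne_of_ne h₁)) hdepth
end

section
/- Let $A = \mathbb{Q}[x,z]$ with $I = (x^2+1, z)$ and $B = \mathbb{Q}[y,t]$ with $J = (y^2+1, t)$, viewed in $R = \mathbb{Q}[x,z,y,t]$. Then $I$ and $J$ are prime ideals, the minimal primes of $I + J$ in $R$ are $(x^2+1, t, z, x-y)$ and $(x^2+1, t, z, x+y)$, and $\operatorname{Ass}(IJ, x-y) = \{(x^2+1, z, x-y),\ (y^2+1, t, x-y),\ (x^2+1, z, t, x-y)\}$. -/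
/-!
Over `K = ℚ[X]/(X² + 1) = ℚ(i)`, each prime involved is the kernel of an explicit substitution of
the variables into a domain (`K` or a polynomial ring over `K`); the substitution is inverted on
`R ⧸ p` by sending `i` to the class of `x` (or `y`), so its kernel is exactly `p`.

Minimal primes: `(x - y)(x + y) = (x² + 1) - (y² + 1) ∈ I + J`, so every prime over `I + J`
contains `I + J + (x - y)` or `I + J + (x + y)`, and these two primes are incomparable.

Associated primes of `R/N`, `N = IJ + (x - y)`: for any ideal `L` and element `a` the exact
sequence `0 → R/(L : a) → R/L → R/(L + (a)) → 0`, the first map being multiplication by `a`,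
gives `Ass(R/L) ⊆ Ass(R/(L : a)) ∪ Ass(R/(L + (a)))`. Along `N ⊆ N + (x² + 1) ⊆ Q₁` (the last
step adds `z`) the colon ideals are `(N : x² + 1) = Q₃` and `(N + (x² + 1) : z) = Q₂`;
conversely `Q₁, Q₂, Q₃` are the colons of `N` by `t`, `z`, `x² + 1`. The colon `(N : x² + 1)`
is computed through `R/(z, t, x - y) = ℚ[x]`, where `N` becomes `((x² + 1)²)`.
-/

section General

variable {R : Type*} [CommRing R]

theorem RingHom.ker_eq_of_comp_eq_mk {S : Type*} [CommRing S] {p : Ideal R} {θ : R →+* S}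
    (hθ : p ≤ RingHom.ker θ) {σ : S →+* R ⧸ p} (hσ : σ.comp θ = Ideal.Quotient.mk p) :
    RingHom.ker θ = p := by
  refine le_antisymm (fun r hr => ?_) hθ
  rw [← Ideal.Quotient.eq_zero_iff_mem, ← hσ, RingHom.comp_apply, RingHom.mem_ker.mp hr, map_zero]

theorem Ideal.colon_singleton_eq_of_isPrime {I p : Ideal R} [hp : p.IsPrime] {a : R}
    (ha : a ∉ p) (hI : I ≤ p) (hpa : p ≤ I.colon {a}) : I.colon {a} = p :=
  le_antisymm
    (fun _ hr => (hp.mem_or_mem (hI (Submodule.mem_colon_singleton.mp hr))).resolve_right ha) hpa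

theorem Ideal.minimalPrimes_eq_pair {I : Ideal R} {a b : R} (hab : a * b ∈ I)
    (ha : (I ⊔ Ideal.span {a}).IsPrime) (hb : (I ⊔ Ideal.span {b}).IsPrime)
    (ha_notMem : a ∉ I ⊔ Ideal.span {b}) (hb_notMem : b ∉ I ⊔ Ideal.span {a}) :
    I.minimalPrimes = {I ⊔ Ideal.span {a}, I ⊔ Ideal.span {b}} := by
  have sup_le_of_mem {q : Ideal R} (hI : I ≤ q) {c : R} (hc : c ∈ q) : I ⊔ Ideal.span {c} ≤ q :=
    sup_le hI ((Ideal.span_singleton_le_iff_mem q).mpr hc)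
  ext p
  constructor
  · rintro ⟨⟨hp, hIp⟩, hmin⟩
    rcases hp.mem_or_mem (hIp hab) with h | h
    · exact .inl (le_antisymm (hmin ⟨ha, le_sup_left⟩ (sup_le_of_mem hIp h)) (sup_le_of_mem hIp h))
    · exact .inr (le_antisymm (hmin ⟨hb, le_sup_left⟩ (sup_le_of_mem hIp h)) (sup_le_of_mem hIp h))
  · rintro (rfl | rfl)
    · refine ⟨⟨ha, le_sup_left⟩, fun q ⟨hq, hIq⟩ hqa => ?_⟩
      rcases hq.mem_or_mem (hIq hab) with h | h
      · exact sup_le_of_mem hIq h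
      · exact absurd (hqa h) hb_notMem
    · refine ⟨⟨hb, le_sup_left⟩, fun q ⟨hq, hIq⟩ hqb => ?_⟩
      rcases hq.mem_or_mem (hIq hab) with h | h
      · exact absurd (hqb h) ha_notMem
      · exact sup_le_of_mem hIq h

theorem Ideal.Quotient.bot_colon_mk (I : Ideal R) (a : R) :
    (⊥ : Submodule R (R ⧸ I)).colon {Ideal.Quotient.mk I a} = I.colon {a} := by
  ext r
  rw [Submodule.mem_colon_singleton, Submodule.mem_colon_singleton, Submodule.mem_bot,
    Algebra.smul_def, Ideal.Quotient.algebraMap_eq, ← map_mul, Ideal.Quotient.eq_zero_iff_mem,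
    smul_eq_mul]

theorem mem_associatedPrimes_quotient_of_colon_eq {I p : Ideal R} [hp : p.IsPrime] {a : R}
    (h : I.colon {a} = p) : p ∈ associatedPrimes R (R ⧸ I) :=
  ⟨hp, Ideal.Quotient.mk I a, by rw [Ideal.Quotient.bot_colon_mk, h, hp.radical]⟩

theorem associatedPrimes_quotient_of_isPrime [IsNoetherianRing R] {p : Ideal R} (hp : p.IsPrime) :
    associatedPrimes R (R ⧸ p) = {p} := by
  rw [associatedPrimes.eq_singleton_of_isPrimary hp.isPrimary, hp.radical]

theorem associatedPrimes_quotient_subset_union (I : Ideal R) (a : R) :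
    associatedPrimes R (R ⧸ I) ⊆
      associatedPrimes R (R ⧸ I.colon {a}) ∪ associatedPrimes R (R ⧸ (I ⊔ Ideal.span {a})) := by
  set f := LinearMap.toSpanSingleton R (R ⧸ I) (Ideal.Quotient.mk I a)
  have hf (s : R) : f s = Ideal.Quotient.mk I (s * a) := by
    rw [LinearMap.toSpanSingleton_apply, Algebra.smul_def, Ideal.Quotient.algebraMap_eq, map_mul]
  have hker : I.colon {a} = LinearMap.ker f := by
    ext r
    rw [LinearMap.mem_ker, LinearMap.toSpanSingleton_apply, ← Submodule.mem_bot R,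
      ← Submodule.mem_colon_singleton, Ideal.Quotient.bot_colon_mk]
  refine associatedPrimes.subset_union_of_exact
    (LinearMap.ker_eq_bot.mp (Submodule.ker_liftQ_eq_bot' _ f hker))
    (g := Submodule.factor (le_sup_left : I ≤ I ⊔ Ideal.span {a})) fun y => ?_
  obtain ⟨r, rfl⟩ := Submodule.Quotient.mk_surjective _ y
  rw [← Submodule.mkQ_apply, Submodule.factor_mk, Submodule.mkQ_apply,
    Submodule.Quotient.mk_eq_zero, Submodule.mem_sup]
  simp only [Ideal.mem_span_singleton', Set.mem_range]
  constructor
  · rintro ⟨i, hi, _, ⟨s, rfl⟩, rfl⟩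
    refine ⟨Submodule.Quotient.mk s, ?_⟩
    rw [Submodule.liftQ_apply, hf]
    exact (Ideal.Quotient.eq.mpr (by simpa using hi)).symm
  · rintro ⟨y, hy⟩
    obtain ⟨s, rfl⟩ := Submodule.Quotient.mk_surjective _ y
    rw [Submodule.liftQ_apply, hf] at hy
    exact ⟨r - s * a, Ideal.Quotient.eq.mp hy.symm, s * a, ⟨s, rfl⟩, sub_add_cancel r _⟩

end General

noncomputable section

namespace BihomogeneityCounterexample

open MvPolynomial

abbrev R : Type := MvPolynomial (Fin 4) ℚ
abbrev x : R := X 0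
abbrev z : R := X 1
abbrev y : R := X 2
abbrev t : R := X 3

def I : Ideal R := Ideal.span {x ^ 2 + 1, z}
def J : Ideal R := Ideal.span {y ^ 2 + 1, t}
def N : Ideal R := I * J ⊔ Ideal.span {x - y}
def Q₁ : Ideal R := Ideal.span {x ^ 2 + 1, z, x - y}
def Q₂ : Ideal R := Ideal.span {y ^ 2 + 1, t, x - y}
def Q₃ : Ideal R := Ideal.span {x ^ 2 + 1, z, t, x - y}
def P : Ideal R := Ideal.span {x ^ 2 + 1, t, z, x + y}

instance fact_irreducible_X_sq_add_one :
    Fact (Irreducible (Polynomial.X ^ 2 + 1 : Polynomial ℚ)) := by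
  refine ⟨Polynomial.irreducible_of_degree_le_three_of_not_isRoot ?_ fun a => ?_⟩
  · rw [show (Polynomial.X ^ 2 + 1 : Polynomial ℚ).natDegree = 2 by compute_degree!]
    decide
  · simp only [Polynomial.IsRoot, Polynomial.eval_add, Polynomial.eval_pow, Polynomial.eval_X,
      Polynomial.eval_one]
    positivity

abbrev K : Type := AdjoinRoot (Polynomial.X ^ 2 + 1 : Polynomial ℚ)

abbrev i : K := AdjoinRoot.root _

theorem i_sq_add_one : i ^ 2 + 1 = 0 := by
  have := AdjoinRoot.eval₂_root (Polynomial.X ^ 2 + 1 : Polynomial ℚ)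
  rwa [Polynomial.eval₂_add, Polynomial.eval₂_pow, Polynomial.eval₂_X, Polynomial.eval₂_one] at this

theorem C_i_sq_add_one : (C i : MvPolynomial (Fin 4) K) ^ 2 + 1 = 0 := by
  rw [← map_pow, ← map_one C, ← map_add, i_sq_add_one, map_zero]

theorem two_mul_i_ne_zero : 2 * i ≠ 0 := by
  have : CharZero K := algebraRat.charZero K
  refine mul_ne_zero two_ne_zero fun h => ?_
  simpa [h] using i_sq_add_one

def liftK {p : Ideal R} {w : R} (hw : w ^ 2 + 1 ∈ p) : K →+* R ⧸ p :=
  AdjoinRoot.lift (algebraMap ℚ (R ⧸ p)) (Ideal.Quotient.mk p w)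
    (by simpa using Ideal.Quotient.eq_zero_iff_mem.mpr hw)

@[simp]
theorem liftK_i {p : Ideal R} {w : R} (hw : w ^ 2 + 1 ∈ p) :
    liftK hw i = Ideal.Quotient.mk p w :=
  AdjoinRoot.lift_root _

def liftPoly {p : Ideal R} {w : R} (hw : w ^ 2 + 1 ∈ p) : MvPolynomial (Fin 4) K →+* R ⧸ p :=
  eval₂Hom (liftK hw) fun n => Ideal.Quotient.mk p (X n)

theorem ker_eq_of_lift {S : Type*} [CommRing S] {p : Ideal R} {θ : R →+* S}
    (hp : p ≤ RingHom.ker θ) (σ : S →+* R ⧸ p)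
    (hσ : ∀ n, σ (θ (X n)) = Ideal.Quotient.mk p (X n)) : RingHom.ker θ = p :=
  RingHom.ker_eq_of_comp_eq_mk hp (MvPolynomial.ringHom_ext' (RingHom.ext_rat _ _) hσ)

def subst (v : Fin 4 → MvPolynomial (Fin 4) K) : R →+* MvPolynomial (Fin 4) K :=
  eval₂Hom (C.comp (algebraMap ℚ K)) v

theorem x_sq_add_one_mem_Q₂ : x ^ 2 + 1 ∈ Q₂ := by
  rw [show x ^ 2 + 1 = (y ^ 2 + 1) + (x + y) * (x - y) by ring]
  exact add_mem (Ideal.subset_span (by simp)) (Ideal.mul_mem_left _ _ (Ideal.subset_span (by simp)))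

theorem ker_subst_I : RingHom.ker (subst ![C i, 0, X 2, X 3]) = I := by
  have hw : x ^ 2 + 1 ∈ I := Ideal.subset_span (by simp)
  refine ker_eq_of_lift ?_ (liftPoly hw) fun n => ?_
  · simp [I, Ideal.span_le, Set.insert_subset_iff, subst, C_i_sq_add_one]
  · fin_cases n <;> simp [subst, liftPoly, eq_comm (a := (0 : R ⧸ I)),
      Ideal.Quotient.eq_zero_iff_mem]
    exact Ideal.subset_span (by simp)

theorem ker_subst_J : RingHom.ker (subst ![X 0, X 1, C i, 0]) = J := by
  have hw : y ^ 2 + 1 ∈ J := Ideal.subset_span (by simp)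
  refine ker_eq_of_lift ?_ (liftPoly hw) fun n => ?_
  · simp [J, Ideal.span_le, Set.insert_subset_iff, subst, C_i_sq_add_one]
  · fin_cases n <;> simp [subst, liftPoly, eq_comm (a := (0 : R ⧸ J)),
      Ideal.Quotient.eq_zero_iff_mem]
    exact Ideal.subset_span (by simp)

theorem ker_subst_Q₁ : RingHom.ker (subst ![C i, 0, C i, X 3]) = Q₁ := by
  have hw : x ^ 2 + 1 ∈ Q₁ := Ideal.subset_span (by simp)
  refine ker_eq_of_lift ?_ (liftPoly hw) fun n => ?_
  · simp [Q₁, Ideal.span_le, Set.insert_subset_iff, subst, C_i_sq_add_one]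
  · fin_cases n <;> simp [subst, liftPoly, eq_comm (a := (0 : R ⧸ Q₁)),
      Ideal.Quotient.eq_zero_iff_mem, Ideal.Quotient.eq] <;> exact Ideal.subset_span (by simp)

theorem ker_subst_Q₂ : RingHom.ker (subst ![C i, X 1, C i, 0]) = Q₂ := by
  refine ker_eq_of_lift ?_ (liftPoly x_sq_add_one_mem_Q₂) fun n => ?_
  · simp [Q₂, Ideal.span_le, Set.insert_subset_iff, subst, C_i_sq_add_one]
  · fin_cases n <;> simp [subst, liftPoly, eq_comm (a := (0 : R ⧸ Q₂)),
      Ideal.Quotient.eq_zero_iff_mem, Ideal.Quotient.eq] <;> exact Ideal.subset_span (by simp)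

def φ : R →+* Polynomial ℚ := eval₂Hom Polynomial.C ![Polynomial.X, 0, Polynomial.X, 0]

theorem ker_mk_comp_φ : RingHom.ker ((AdjoinRoot.mk (Polynomial.X ^ 2 + 1)).comp φ) = Q₃ := by
  have hw : x ^ 2 + 1 ∈ Q₃ := Ideal.subset_span (by simp)
  refine ker_eq_of_lift ?_ (liftK hw) fun n => ?_
  · simp [Q₃, Ideal.span_le, Set.insert_subset_iff, φ, i_sq_add_one]
  · fin_cases n <;> simp [φ, eq_comm (a := (0 : R ⧸ Q₃)), Ideal.Quotient.eq_zero_iff_mem,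
      Ideal.Quotient.eq] <;> exact Ideal.subset_span (by simp)

def ψ : R →+* K := eval₂Hom (algebraMap ℚ K) ![i, 0, -i, 0]

theorem ker_ψ : RingHom.ker ψ = P := by
  have hw : x ^ 2 + 1 ∈ P := Ideal.subset_span (by simp)
  refine ker_eq_of_lift ?_ (liftK hw) fun n => ?_
  · simp [P, Ideal.span_le, Set.insert_subset_iff, ψ, i_sq_add_one]
  · fin_cases n <;> simp [ψ, eq_comm (a := (0 : R ⧸ P)), Ideal.Quotient.eq_zero_iff_mem,
      neg_eq_iff_add_eq_zero, ← map_add] <;> exact Ideal.subset_span (by simp)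

instance isPrime_I : I.IsPrime := ker_subst_I ▸ RingHom.ker_isPrime _
instance isPrime_J : J.IsPrime := ker_subst_J ▸ RingHom.ker_isPrime _
instance isPrime_Q₁ : Q₁.IsPrime := ker_subst_Q₁ ▸ RingHom.ker_isPrime _
instance isPrime_Q₂ : Q₂.IsPrime := ker_subst_Q₂ ▸ RingHom.ker_isPrime _
instance isPrime_Q₃ : Q₃.IsPrime := ker_mk_comp_φ ▸ RingHom.ker_isPrime _
instance isPrime_P : P.IsPrime := ker_ψ ▸ RingHom.ker_isPrime _

theorem sup_span_sub_eq_Q₃ : I ⊔ J ⊔ Ideal.span {x - y} = Q₃ := by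
  have hy : y ^ 2 + 1 ∈ Q₃ := by
    rw [show y ^ 2 + 1 = (x ^ 2 + 1) - (x + y) * (x - y) by ring]
    exact sub_mem (Ideal.subset_span (by simp))
      (Ideal.mul_mem_left _ _ (Ideal.subset_span (by simp)))
  refine le_antisymm (sup_le (sup_le (Ideal.span_mono (by simp [Set.insert_subset_iff])) ?_)
    (Ideal.span_mono (by simp))) ?_
  · simp only [J, Ideal.span_le, Set.insert_subset_iff, Set.singleton_subset_iff, SetLike.mem_coe]
    exact ⟨hy, Ideal.subset_span (by simp)⟩
  · simp only [Q₃, Ideal.span_le, Set.insert_subset_iff, Set.singleton_subset_iff, SetLike.mem_coe]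
    exact ⟨Ideal.mem_sup_left (Ideal.mem_sup_left (Ideal.subset_span (by simp))),
      Ideal.mem_sup_left (Ideal.mem_sup_left (Ideal.subset_span (by simp))),
      Ideal.mem_sup_left (Ideal.mem_sup_right (Ideal.subset_span (by simp))),
      Ideal.mem_sup_right (Ideal.mem_span_singleton_self _)⟩

theorem sup_span_add_eq_P : I ⊔ J ⊔ Ideal.span {x + y} = P := by
  have hy : y ^ 2 + 1 ∈ P := by
    rw [show y ^ 2 + 1 = (x ^ 2 + 1) - (x - y) * (x + y) by ring]
    exact sub_mem (Ideal.subset_span (by simp))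
      (Ideal.mul_mem_left _ _ (Ideal.subset_span (by simp)))
  refine le_antisymm (sup_le (sup_le (Ideal.span_mono (by simp [Set.insert_subset_iff])) ?_)
    (Ideal.span_mono (by simp))) ?_
  · simp only [J, Ideal.span_le, Set.insert_subset_iff, Set.singleton_subset_iff, SetLike.mem_coe]
    exact ⟨hy, Ideal.subset_span (by simp)⟩
  · simp only [P, Ideal.span_le, Set.insert_subset_iff, Set.singleton_subset_iff, SetLike.mem_coe]
    exact ⟨Ideal.mem_sup_left (Ideal.mem_sup_left (Ideal.subset_span (by simp))),
      Ideal.mem_sup_left (Ideal.mem_sup_right (Ideal.subset_span (by simp))),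
      Ideal.mem_sup_left (Ideal.mem_sup_left (Ideal.subset_span (by simp))),
      Ideal.mem_sup_right (Ideal.mem_span_singleton_self _)⟩

theorem minimalPrimes_I_sup_J :
    (I ⊔ J).minimalPrimes = {Ideal.span {x ^ 2 + 1, t, z, x - y}, P} := by
  rw [show Ideal.span {x ^ 2 + 1, t, z, x - y} = Q₃ by rw [Q₃, Set.insert_comm t z],
    ← sup_span_sub_eq_Q₃, ← sup_span_add_eq_P]
  refine Ideal.minimalPrimes_eq_pair ?_ ?_ ?_ ?_ ?_
  · rw [show (x - y) * (x + y) = (x ^ 2 + 1) - (y ^ 2 + 1) by ring]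
    exact sub_mem (Ideal.mem_sup_left (Ideal.subset_span (by simp)))
      (Ideal.mem_sup_right (Ideal.subset_span (by simp)))
  · rw [sup_span_sub_eq_Q₃]
    infer_instance
  · rw [sup_span_add_eq_P]
    infer_instance
  · rw [sup_span_add_eq_P, ← ker_ψ, RingHom.mem_ker]
    simpa [ψ, two_mul] using two_mul_i_ne_zero
  · rw [sup_span_sub_eq_Q₃, ← ker_mk_comp_φ, RingHom.mem_ker]
    simpa [φ, two_mul] using two_mul_i_ne_zero

theorem mul_mem_N {a b : R} (ha : a ∈ I) (hb : b ∈ J) : a * b ∈ N :=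
  Ideal.mem_sup_left (Ideal.mul_mem_mul ha hb)

theorem sub_mul_mem_N (c : R) : (x - y) * c ∈ N :=
  Ideal.mem_sup_right (Ideal.mul_mem_right c _ (Ideal.mem_span_singleton_self _))

theorem N_le_Q₁ : N ≤ Q₁ :=
  sup_le (Ideal.mul_le_left.trans (Ideal.span_mono (by simp [Set.insert_subset_iff])))
    (Ideal.span_mono (by simp))

theorem N_le_Q₂ : N ≤ Q₂ :=
  sup_le (Ideal.mul_le_right.trans (Ideal.span_mono (by simp [Set.insert_subset_iff])))
    (Ideal.span_mono (by simp))

theorem colon_N_t : N.colon {t} = Q₁ := by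
  refine Ideal.colon_singleton_eq_of_isPrime ?_ N_le_Q₁ ?_
  · simp [← ker_subst_Q₁, subst]
  · simp only [Q₁, Ideal.span_le, Set.insert_subset_iff, Set.singleton_subset_iff,
      SetLike.mem_coe, Submodule.mem_colon_singleton, smul_eq_mul]
    exact ⟨mul_mem_N (Ideal.subset_span (by simp)) (Ideal.subset_span (by simp)),
      mul_mem_N (Ideal.subset_span (by simp)) (Ideal.subset_span (by simp)), sub_mul_mem_N t⟩

theorem colon_N_z : N.colon {z} = Q₂ := by
  refine Ideal.colon_singleton_eq_of_isPrime ?_ N_le_Q₂ ?_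
  · simp [← ker_subst_Q₂, subst]
  · simp only [Q₂, Ideal.span_le, Set.insert_subset_iff, Set.singleton_subset_iff,
      SetLike.mem_coe, Submodule.mem_colon_singleton, smul_eq_mul]
    refine ⟨?_, ?_, sub_mul_mem_N z⟩ <;> rw [mul_comm] <;>
      exact mul_mem_N (Ideal.subset_span (by simp)) (Ideal.subset_span (by simp))

theorem colon_N_sup_z : (N ⊔ Ideal.span {x ^ 2 + 1}).colon {z} = Q₂ := by
  refine Ideal.colon_singleton_eq_of_isPrime ?_
    (sup_le N_le_Q₂ ((Ideal.span_singleton_le_iff_mem _).mpr x_sq_add_one_mem_Q₂)) ?_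
  · simp [← ker_subst_Q₂, subst]
  · exact colon_N_z.ge.trans (Submodule.colon_mono le_sup_left subset_rfl)

theorem N_sup_sup_eq_Q₁ : N ⊔ Ideal.span {x ^ 2 + 1} ⊔ Ideal.span {z} = Q₁ := by
  refine le_antisymm
    (sup_le (sup_le N_le_Q₁ (Ideal.span_mono (by simp))) (Ideal.span_mono (by simp))) ?_
  simp only [Q₁, Ideal.span_le, Set.insert_subset_iff, Set.singleton_subset_iff, SetLike.mem_coe]
  exact ⟨Ideal.mem_sup_left (Ideal.mem_sup_right (Ideal.mem_span_singleton_self _)),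
    Ideal.mem_sup_right (Ideal.mem_span_singleton_self _),
    Ideal.mem_sup_left (Ideal.mem_sup_left (Ideal.mem_sup_right (Ideal.mem_span_singleton_self _)))⟩

theorem N_le_comap_φ : N ≤ Ideal.comap φ (Ideal.span {(Polynomial.X ^ 2 + 1) ^ 2}) := by
  have dvd_of_mem {a : R} (ha : a ∈ I ⊔ J) : Polynomial.X ^ 2 + 1 ∣ φ a := by
    have := (le_sup_left.trans sup_span_sub_eq_Q₃.le) ha
    rwa [← ker_mk_comp_φ, RingHom.mem_ker, RingHom.comp_apply, AdjoinRoot.mk_eq_zero] at this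
  refine sup_le (Ideal.mul_le.mpr fun a ha b hb => ?_) (Ideal.span_le.mpr ?_)
  · rw [Ideal.mem_comap, Ideal.mem_span_singleton, map_mul, sq]
    exact mul_dvd_mul (dvd_of_mem (Ideal.mem_sup_left ha)) (dvd_of_mem (Ideal.mem_sup_right hb))
  · simp [φ]

theorem colon_N_x_sq_add_one : N.colon {x ^ 2 + 1} = Q₃ := by
  refine le_antisymm (fun r hr => ?_) ?_
  · have h := N_le_comap_φ (Submodule.mem_colon_singleton.mp hr)
    have hφ : φ (x ^ 2 + 1) = Polynomial.X ^ 2 + 1 := by simp [φ]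
    rw [Ideal.mem_comap, Ideal.mem_span_singleton, smul_eq_mul, map_mul, hφ, sq] at h
    rw [← ker_mk_comp_φ, RingHom.mem_ker, RingHom.comp_apply, AdjoinRoot.mk_eq_zero]
    exact (mul_dvd_mul_iff_right fact_irreducible_X_sq_add_one.out.ne_zero).mp h
  · have mul_mem {u : R} (hu : u ∈ I) : u * (x ^ 2 + 1) ∈ N := by
      rw [show u * (x ^ 2 + 1) = u * (y ^ 2 + 1) + (x - y) * (u * (x + y)) by ring]
      exact add_mem (mul_mem_N hu (Ideal.subset_span (by simp))) (sub_mul_mem_N _)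
    simp only [Q₃, Ideal.span_le, Set.insert_subset_iff, Set.singleton_subset_iff,
      SetLike.mem_coe, Submodule.mem_colon_singleton, smul_eq_mul]
    refine ⟨mul_mem (Ideal.subset_span (by simp)), mul_mem (Ideal.subset_span (by simp)), ?_,
      sub_mul_mem_N _⟩
    rw [mul_comm]
    exact mul_mem_N (Ideal.subset_span (by simp)) (Ideal.subset_span (by simp))

theorem associatedPrimes_quotient_N : associatedPrimes R (R ⧸ N) = {Q₁, Q₂, Q₃} := by
  refine subset_antisymm (fun p hp => ?_) ?_
  · rcases associatedPrimes_quotient_subset_union N (x ^ 2 + 1) hp with h | h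
    · rw [colon_N_x_sq_add_one, associatedPrimes_quotient_of_isPrime isPrime_Q₃] at h
      simp [Set.mem_singleton_iff.mp h]
    rcases associatedPrimes_quotient_subset_union _ z h with h | h
    · rw [colon_N_sup_z, associatedPrimes_quotient_of_isPrime isPrime_Q₂] at h
      simp [Set.mem_singleton_iff.mp h]
    · rw [N_sup_sup_eq_Q₁, associatedPrimes_quotient_of_isPrime isPrime_Q₁] at h
      simp [Set.mem_singleton_iff.mp h]
  · simp only [Set.insert_subset_iff, Set.singleton_subset_iff]
    exact ⟨mem_associatedPrimes_quotient_of_colon_eq colon_N_t,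
      mem_associatedPrimes_quotient_of_colon_eq colon_N_z,
      mem_associatedPrimes_quotient_of_colon_eq colon_N_x_sq_add_one⟩

end BihomogeneityCounterexample

end

open MvPolynomial

theorem stmt18 :
    let R := MvPolynomial (Fin 4) ℚ
    let x : R := X 0
    let z : R := X 1
    let y : R := X 2
    let t : R := X 3
    let I : Ideal R := Ideal.span {x ^ 2 + 1, z}
    let J : Ideal R := Ideal.span {y ^ 2 + 1, t}
    I.IsPrime ∧ J.IsPrime ∧
    (I ⊔ J).minimalPrimes =
      {Ideal.span {x ^ 2 + 1, t, z, x - y}, Ideal.span {x ^ 2 + 1, t, z, x + y}} ∧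
    associatedPrimes R (R ⧸ (I * J ⊔ Ideal.span {x - y})) =
      {Ideal.span {x ^ 2 + 1, z, x - y}, Ideal.span {y ^ 2 + 1, t, x - y},
        Ideal.span {x ^ 2 + 1, z, t, x - y}} := by
  intro R x z y t I J
  exact ⟨BihomogeneityCounterexample.isPrime_I, BihomogeneityCounterexample.isPrime_J,
    BihomogeneityCounterexample.minimalPrimes_I_sup_J,
    BihomogeneityCounterexample.associatedPrimes_quotient_N⟩
end
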